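/- arXiv:1803.00334 — 5 statements merged into one kernel-verified Lean document; each statement's English description precedes it below -/
import Mathlib

section
/- A Tychonoff space X fails to be discrete if and only if there exist an infinite index set κ, a point z ∈ X, a family (g_i)_{i∈κ} of continuous functions from X to [0,2], and a family (U_i)_{i∈κ} of open subsets of X such that conditions (i)–(iii) hold. -/
open Set Function

private lemma exists_scale {t : ℝ} (h0 : 0 < t) (h1 : t ≤ 1) :
    ∃ m : ℕ, (1/2:ℝ)^(m+1) ≤ t ∧ t ≤ (1/2:ℝ)^m := by
  classical
  have hev : ∃ n : ℕ, (1/2:ℝ)^n < t := exists_pow_lt_of_lt_one h0 (by norm_num)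
  have hn₀ : (1/2:ℝ)^(Nat.find hev) < t := Nat.find_spec hev
  have h0' : Nat.find hev ≠ 0 := by
    intro h
    rw [h] at hn₀
    simp at hn₀
    linarith
  obtain ⟨m, hm⟩ := Nat.exists_eq_succ_of_ne_zero h0'
  refine ⟨m, ?_, ?_⟩
  · rw [← Nat.succ_eq_add_one, ← hm]; exact hn₀.le
  · exact not_lt.mp (Nat.find_min hev (by omega))

/-- Given a family of functions with pairwise disjoint supports, all vanishing at `z`,
with `z` in the closure of the union of the dyadic annuli of parity `p`, produce the family. -/
private lemma key {X : Type} [TopologicalSpace X] (z : X) (M : Set (X → ℝ))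
    (hM : ∀ f ∈ M, Continuous f ∧ f z = 0 ∧ ∀ x, f x ∈ Set.Icc (0:ℝ) 1)
    (hdisj : M.Pairwise fun f g => Function.support f ∩ Function.support g = ∅)
    (p : ℕ) (hne : M.Nonempty)
    (hcl : z ∈ closure (⋃ (i : M) (k : ℕ),
      {x : X | (1/2:ℝ)^(2*k+p+1) ≤ i.1 x ∧ i.1 x ≤ (1/2:ℝ)^(2*k+p)})) :
    ∃ (κ : Type) (_ : Infinite κ) (z : X) (g : κ → X → ℝ) (U : κ → Set X),
        (∀ i, Continuous (g i)) ∧ (∀ i x, g i x ∈ Set.Icc (0 : ℝ) 2) ∧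
        (∀ i, IsOpen (U i)) ∧
        (∀ i, tsupport (g i) ⊆ U i) ∧
        (∀ i j, i ≠ j → U i ∩ U j = ∅) ∧
        (∀ i, z ∉ U i) ∧
        z ∈ closure (⋃ i, {x : X | 1 ≤ g i x}) := by
  classical
  have : Nonempty M := hne.to_subtype
  refine ⟨M × ℕ, inferInstance, z, ?_⟩
  -- scale
  set c : ℕ → ℝ := fun m => (1/2:ℝ)^m with hc
  have hcpos : ∀ m, 0 < c m := fun m => by positivity
  -- data
  refine ⟨fun i => fun x =>
      2 * max 0 (min 1 (min ((i.1.1 x - 3/8 * c (2*i.2+p)) / (1/8 * c (2*i.2+p)))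
        ((9/8 * c (2*i.2+p) - i.1.1 x) / (1/8 * c (2*i.2+p))))),
    fun i => {x : X | 5/16 * c (2*i.2+p) < i.1.1 x ∧ i.1.1 x < 5/4 * c (2*i.2+p)}, ?_, ?_, ?_, ?_, ?_, ?_, ?_⟩
  · -- continuity
    intro i
    have hf : Continuous (i.1.1 : X → ℝ) := (hM _ i.1.2).1
    have hd : (1/8 * c (2*i.2+p)) ≠ 0 := by positivity
    fun_prop
  · -- range
    intro i x
    constructor
    · positivity
    · have : max 0 (min 1 (min ((i.1.1 x - 3/8 * c (2*i.2+p)) / (1/8 * c (2*i.2+p)))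
        ((9/8 * c (2*i.2+p) - i.1.1 x) / (1/8 * c (2*i.2+p))))) ≤ 1 :=
        max_le (by norm_num) (min_le_left _ _)
      linarith
  · -- open
    intro i
    have hf : Continuous (i.1.1 : X → ℝ) := (hM _ i.1.2).1
    show IsOpen {x : X | 5/16 * c (2*i.2+p) < i.1.1 x ∧ i.1.1 x < 5/4 * c (2*i.2+p)}
    exact isOpen_Ioo.preimage hf
  · -- tsupport
    intro i
    set m := 2*i.2+p
    have hf : Continuous (i.1.1 : X → ℝ) := (hM _ i.1.2).1
    have hdpos : (0:ℝ) < 1/8 * c m := by positivity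
    have hsub : Function.support (fun x =>
        2 * max 0 (min 1 (min ((i.1.1 x - 3/8 * c m) / (1/8 * c m))
          ((9/8 * c m - i.1.1 x) / (1/8 * c m)))))
        ⊆ i.1.1 ⁻¹' (Set.Icc (3/8 * c m) (9/8 * c m)) := by
      intro x hx
      simp only [Function.mem_support] at hx
      set r1 := (i.1.1 x - 3/8 * c m) / (1/8 * c m) with hr1def
      set r2 := (9/8 * c m - i.1.1 x) / (1/8 * c m) with hr2def
      have htm : 0 < min 1 (min r1 r2) := by
        by_contra hcon
        push_neg at hcon
        apply hx
        rw [max_eq_left hcon]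
        ring
      have h1 : 0 < r1 :=
        lt_of_lt_of_le htm ((min_le_right _ _).trans (min_le_left _ _))
      have h2 : 0 < r2 :=
        lt_of_lt_of_le htm ((min_le_right _ _).trans (min_le_right _ _))
      have h1' : 0 < i.1.1 x - 3/8 * c m := by
        by_contra hcon
        push_neg at hcon
        have : r1 ≤ 0 := by rw [hr1def]; exact div_nonpos_of_nonpos_of_nonneg hcon hdpos.le
        linarith
      have h2' : 0 < 9/8 * c m - i.1.1 x := by
        by_contra hcon
        push_neg at hcon
        have : r2 ≤ 0 := by rw [hr2def]; exact div_nonpos_of_nonpos_of_nonneg hcon hdpos.le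
        linarith
      exact ⟨by linarith, by linarith⟩
    have hclosed : IsClosed (i.1.1 ⁻¹' (Set.Icc (3/8 * c m) (9/8 * c m))) :=
      isClosed_Icc.preimage hf
    refine (closure_minimal hsub hclosed).trans ?_
    intro x hx
    have := hcpos m
    exact ⟨by simp only [Set.mem_preimage, Set.mem_Icc] at hx; linarith [hx.1],
      by simp only [Set.mem_preimage, Set.mem_Icc] at hx; linarith [hx.2]⟩
  · -- disjoint
    intro i j hij
    rw [Set.eq_empty_iff_forall_notMem]
    rintro x ⟨hxi, hxj⟩
    simp only [Set.mem_setOf_eq] at hxi hxj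
    by_cases hff : i.1 = j.1
    · -- same function, different k
      have hkk : i.2 ≠ j.2 := by
        intro h; exact hij (Prod.ext hff h)
      have main : ∀ a b : M × ℕ, a.1 = b.1 → a.2 < b.2 →
          (5/16 * c (2*a.2+p) < a.1.1 x ∧ a.1.1 x < 5/4 * c (2*a.2+p)) →
          (5/16 * c (2*b.2+p) < b.1.1 x ∧ b.1.1 x < 5/4 * c (2*b.2+p)) → False := by
        rintro a b hab hlt ⟨ha1, ha2⟩ ⟨hb1, hb2⟩
        rw [hab] at ha1 ha2
        -- c (2*b.2+p) ≤ c (2*a.2+p+2) = c(2a.2+p)/4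
        have h1 : c (2*b.2+p) ≤ c (2*a.2+p+2) := by
          apply pow_le_pow_of_le_one (by norm_num) (by norm_num)
          omega
        have h2 : c (2*a.2+p+2) = c (2*a.2+p) * (1/4) := by
          simp only [hc]
          rw [pow_add]
          norm_num
        have := hcpos (2*a.2+p)
        nlinarith
      rcases Nat.lt_or_ge i.2 j.2 with h | h
      · exact main i j hff h ⟨hxi.1, hxi.2⟩ ⟨hxj.1, hxj.2⟩
      · have h' : j.2 < i.2 := lt_of_le_of_ne h (Ne.symm hkk)
        exact main j i hff.symm h' ⟨hxj.1, hxj.2⟩ ⟨hxi.1, hxi.2⟩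
    · -- different functions: supports disjoint
      have hdd := hdisj i.1.2 j.1.2 (fun h => hff (Subtype.ext h))
      have hx1 : x ∈ Function.support (i.1.1 : X → ℝ) := by
        simp only [Function.mem_support]
        have := hcpos (2*i.2+p)
        intro h; rw [h] at hxi; linarith [hxi.1]
      have hx2 : x ∈ Function.support (j.1.1 : X → ℝ) := by
        simp only [Function.mem_support]
        have := hcpos (2*j.2+p)
        intro h; rw [h] at hxj; linarith [hxj.1]
      have : x ∈ Function.support (i.1.1 : X → ℝ) ∩ Function.support (j.1.1 : X → ℝ) :=
        ⟨hx1, hx2⟩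
      rw [hdd] at this
      exact this
  · -- z not in U
    intro i hz
    simp only [Set.mem_setOf_eq] at hz
    have hz0 : i.1.1 z = 0 := (hM _ i.1.2).2.1
    rw [hz0] at hz
    have := hcpos (2*i.2+p)
    linarith [hz.1]
  · -- closure
    refine closure_mono ?_ hcl
    rintro x hx
    simp only [Set.mem_iUnion] at hx ⊢
    obtain ⟨f, k, hx1, hx2⟩ := hx
    refine ⟨(f, k), ?_⟩
    simp only [Set.mem_setOf_eq]
    set m := 2*k+p
    have hdpos : (0:ℝ) < 1/8 * c m := by positivity
    have hr1 : (1:ℝ) ≤ (f.1 x - 3/8 * c m) / (1/8 * c m) := by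
      rw [le_div_iff₀ hdpos]
      have : (1/2:ℝ)^(m+1) = c m * (1/2) := by rw [hc]; rw [pow_succ]
      rw [this] at hx1
      linarith
    have hr2 : (1:ℝ) ≤ (9/8 * c m - f.1 x) / (1/8 * c m) := by
      rw [le_div_iff₀ hdpos]
      have : (1/2:ℝ)^m = c m := rfl
      rw [this] at hx2
      linarith
    have : min (1:ℝ) (min ((f.1 x - 3/8 * c m) / (1/8 * c m))
        ((9/8 * c m - f.1 x) / (1/8 * c m))) = 1 :=
      min_eq_left (le_min hr1 hr2)
    rw [this]
    norm_num

/-- A Tychonoff (completely regular Hausdorff) space `X` fails to be discrete iff there exist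
an infinite index set `κ`, a point `z ∈ X`, a family of continuous functions `g i : X → [0,2]`
and a family of open sets `U i` satisfying conditions (i)–(iii). -/
theorem not_discrete_iff_exists_family (X : Type) [TopologicalSpace X]
    [CompletelyRegularSpace X] [T2Space X] :
    ¬ DiscreteTopology X ↔
      ∃ (κ : Type) (_ : Infinite κ) (z : X) (g : κ → X → ℝ) (U : κ → Set X),
        (∀ i, Continuous (g i)) ∧ (∀ i x, g i x ∈ Set.Icc (0 : ℝ) 2) ∧
        (∀ i, IsOpen (U i)) ∧
        (∀ i, tsupport (g i) ⊆ U i) ∧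
        (∀ i j, i ≠ j → U i ∩ U j = ∅) ∧
        (∀ i, z ∉ U i) ∧
        z ∈ closure (⋃ i, {x : X | 1 ≤ g i x}) := by
  classical
  constructor
  · intro hnd
    -- get a non-isolated point
    obtain ⟨z, hz⟩ : ∃ z : X, ¬ IsOpen ({z} : Set X) := by
      by_contra h
      push_neg at h
      exact hnd (discreteTopology_iff_isOpen_singleton.mpr h)
    have hnbhd : ∀ N : Set X, IsOpen N → z ∈ N → ∃ y ∈ N, y ≠ z := by
      intro N hN hzN
      by_contra h
      push_neg at h
      have : N = {z} := by
        apply Set.eq_singleton_iff_unique_mem.mpr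
        exact ⟨hzN, h⟩
      exact hz (this ▸ hN)
    -- Zorn
    set S : Set (Set (X → ℝ)) := {A |
      (∀ f ∈ A, Continuous f ∧ f z = 0 ∧ ∀ x, f x ∈ Set.Icc (0:ℝ) 1) ∧
      (A.Pairwise fun f g => Function.support f ∩ Function.support g = ∅)} with hS
    obtain ⟨M, hMmax⟩ : ∃ M, Maximal (· ∈ S) M := by
      apply zorn_subset
      intro C hCS hchain
      refine ⟨⋃₀ C, ⟨?_, ?_⟩, fun s hs => Set.subset_sUnion_of_mem hs⟩
      · rintro f ⟨A, hA, hfA⟩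
        exact (hCS hA).1 f hfA
      · rintro f ⟨A, hA, hfA⟩ g ⟨B, hB, hgB⟩ hfg
        rcases hchain.total hA hB with h | h
        · exact (hCS hB).2 (h hfA) hgB hfg
        · exact (hCS hA).2 hfA (h hgB) hfg
    have hMS : M ∈ S := hMmax.1
    -- maximality implies z in closure of union of supports
    have hclsupp : z ∈ closure (⋃ f ∈ M, Function.support f) := by
      by_contra hcon
      set K := closure (⋃ f ∈ M, Function.support f) ∪ {z} with hK
      have hKc : IsClosed K := isClosed_closure.union isClosed_singleton
      obtain ⟨y, hy, hyz⟩ := hnbhd (closure (⋃ f ∈ M, Function.support f))ᶜ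
        isClosed_closure.isOpen_compl hcon
      have hyK : y ∉ K := by
        simp only [hK, Set.mem_union, Set.mem_singleton_iff]
        push_neg
        exact ⟨hy, hyz⟩
      obtain ⟨f, hfc, hfy, hfK⟩ := CompletelyRegularSpace.completely_regular y K hKc hyK
      set h : X → ℝ := fun x => 1 - (f x : ℝ) with hh
      have hhz : h z = 0 := by
        have : f z = 1 := hfK (Set.mem_union_right _ rfl)
        simp [hh, this]
      have hhy : h y = 1 := by simp [hh, hfy]
      have hhcont : Continuous h := continuous_const.sub (continuous_subtype_val.comp hfc)
      have hhrange : ∀ x, h x ∈ Set.Icc (0:ℝ) 1 := by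
        intro x
        have h1 := (f x).2.1
        have h2 := (f x).2.2
        exact ⟨by simp only [hh]; linarith, by simp only [hh]; linarith⟩
      have hhsupp : ∀ g ∈ M, Function.support h ∩ Function.support g = ∅ := by
        intro g hg
        rw [Set.eq_empty_iff_forall_notMem]
        rintro x ⟨hx1, hx2⟩
        have hxK : x ∈ K := Set.mem_union_left _
          (subset_closure (Set.mem_biUnion hg hx2))
        have : f x = 1 := hfK hxK
        have : h x = 0 := by simp [hh, this]
        exact hx1 this
      have hins : insert h M ∈ S := by
        constructor
        · rintro g (rfl | hg)
          · exact ⟨hhcont, hhz, hhrange⟩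
          · exact hMS.1 g hg
        · intro a ha b hb hab
          rcases ha with rfl | ha <;> rcases hb with rfl | hb
          · exact absurd rfl hab
          · exact hhsupp b hb
          · rw [Set.inter_comm]; exact hhsupp a ha
          · exact hMS.2 ha hb hab
      have : insert h M ⊆ M := hMmax.2 hins (Set.subset_insert h M)
      have hhM : h ∈ M := this (Set.mem_insert h M)
      have : y ∈ ⋃ f ∈ M, Function.support f :=
        Set.mem_biUnion hhM (by simp only [Function.mem_support, hhy]; norm_num)
      exact hy (subset_closure this)
    -- M is nonempty
    have hMne : M.Nonempty := by
      rcases Set.eq_empty_or_nonempty M with rfl | h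
      · simp at hclsupp
      · exact h
    -- split into parities
    have hsub : (⋃ f ∈ M, Function.support f) ⊆
        (⋃ (i : M) (k : ℕ),
          {x : X | (1/2:ℝ)^(2*k+0+1) ≤ i.1 x ∧ i.1 x ≤ (1/2:ℝ)^(2*k+0)}) ∪
        (⋃ (i : M) (k : ℕ),
          {x : X | (1/2:ℝ)^(2*k+1+1) ≤ i.1 x ∧ i.1 x ≤ (1/2:ℝ)^(2*k+1)}) := by
      rintro x hx
      rw [Set.mem_iUnion₂] at hx
      obtain ⟨f, hf, hfx⟩ := hx
      have hb := (hMS.1 f hf).2.2 x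
      have h0 : 0 < f x := lt_of_le_of_ne hb.1 (Ne.symm hfx)
      obtain ⟨m, hm1, hm2⟩ := exists_scale h0 hb.2
      rcases Nat.even_or_odd m with ⟨k, hk⟩ | ⟨k, hk⟩
      · left
        rw [Set.mem_iUnion]
        refine ⟨⟨f, hf⟩, ?_⟩
        rw [Set.mem_iUnion]
        refine ⟨k, ?_⟩
        have : 2*k+0 = m := by omega
        rw [this]
        exact ⟨hm1, hm2⟩
      · right
        rw [Set.mem_iUnion]
        refine ⟨⟨f, hf⟩, ?_⟩
        rw [Set.mem_iUnion]
        refine ⟨k, ?_⟩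
        have : 2*k+1 = m := by omega
        rw [this]
        exact ⟨hm1, hm2⟩
    have := (closure_mono hsub) hclsupp
    rw [closure_union] at this
    rcases this with h | h
    · exact key z M hMS.1 hMS.2 0 hMne h
    · exact key z M hMS.1 hMS.2 1 hMne h
  · rintro ⟨κ, hκ, z, g, U, hgc, hgr, hUo, hsupp, hdisj, hzU, hzcl⟩
    intro hd
    rw [IsClosed.closure_eq (isClosed_discrete _)] at hzcl
    rw [Set.mem_iUnion] at hzcl
    obtain ⟨i, hi⟩ := hzcl
    have : z ∈ Function.support (g i) := by
      simp only [Set.mem_setOf_eq] at hi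
      simp only [Function.mem_support]
      intro h
      rw [h] at hi
      linarith
    exact hzU i (hsupp i (subset_closure this))
end

section
/- If X is a Tychonoff space that is not discrete, then there exist an infinite index set κ, a point z ∈ X, a family (g_i)_{i∈κ} of continuous functions from X to [0,2], and a family (U_i)_{i∈κ} of open subsets of X such that conditions (i)–(iii) hold. -/
open Set

private lemma pad_family {X : Type} [TopologicalSpace X] (I : Type) (z : X)
    (g : I → X → ℝ) (U : I → Set X)
    (h1 : ∀ i, Continuous (g i)) (h2 : ∀ i x, g i x ∈ Set.Icc (0 : ℝ) 2)
    (h3 : ∀ i, IsOpen (U i)) (h4 : ∀ i, tsupport (g i) ⊆ U i)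
    (h5 : ∀ i j, i ≠ j → U i ∩ U j = ∅) (h6 : ∀ i, z ∉ U i)
    (h7 : z ∈ closure (⋃ i, {x : X | 1 ≤ g i x})) :
    ∃ (κ : Type) (_ : Infinite κ) (z : X) (g : κ → X → ℝ) (U : κ → Set X),
      (∀ i, Continuous (g i)) ∧ (∀ i x, g i x ∈ Set.Icc (0 : ℝ) 2) ∧
      (∀ i, IsOpen (U i)) ∧
      (∀ i, tsupport (g i) ⊆ U i) ∧
      (∀ i j, i ≠ j → U i ∩ U j = ∅) ∧
      (∀ i, z ∉ U i) ∧
      z ∈ closure (⋃ i, {x : X | 1 ≤ g i x}) := by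
  refine ⟨I ⊕ ℕ, inferInstance, z, Sum.elim g fun _ _ => 0, Sum.elim U fun _ => ∅,
    ?_, ?_, ?_, ?_, ?_, ?_, ?_⟩
  · rintro (i | n)
    · exact h1 i
    · exact continuous_const
  · rintro (i | n) x
    · exact h2 i x
    · constructor <;> norm_num
  · rintro (i | n)
    · exact h3 i
    · exact isOpen_empty
  · rintro (i | n)
    · exact h4 i
    · show tsupport (fun _ => (0 : ℝ)) ⊆ ∅
      have : (Function.support fun (_ : X) => (0:ℝ)) = ∅ := Function.support_zero
      rw [tsupport, this, closure_empty]
  · rintro (i | n) (j | m) hij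
    · exact h5 i j (fun h => hij (congrArg Sum.inl h))
    · exact Set.inter_empty _
    · exact Set.empty_inter _
    · exact Set.empty_inter _
  · rintro (i | n)
    · exact h6 i
    · exact notMem_empty z
  · refine closure_mono ?_ h7
    exact Set.iUnion_subset fun i => Set.subset_iUnion_of_subset (Sum.inl i) subset_rfl

private lemma exists_pow_index (v : ℝ) (h0 : 0 < v) (h1 : v < (1/2 : ℝ) ^ 10) :
    ∃ n : ℕ, 10 ≤ n ∧ (1/2 : ℝ) ^ (n + 1) ≤ v ∧ v ≤ (1/2 : ℝ) ^ n := by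
  classical
  have hex : ∃ m, (1/2 : ℝ) ^ m < v := exists_pow_lt_of_lt_one h0 (by norm_num)
  have hM : (1/2 : ℝ) ^ (Nat.find hex) < v := Nat.find_spec hex
  have hM0 : Nat.find hex ≠ 0 := by
    intro h
    rw [h] at hM
    have : (1/2 : ℝ) ^ 10 < 1 := by norm_num
    simp at hM
    linarith
  obtain ⟨n, hn⟩ := Nat.exists_eq_succ_of_ne_zero hM0
  have h2 : (1/2 : ℝ) ^ (n + 1) < v := by rw [hn] at hM; exact hM
  have h3 : ¬ ((1/2 : ℝ) ^ n < v) := Nat.find_min hex (by omega)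
  push_neg at h3
  refine ⟨n, ?_, le_of_lt h2, h3⟩
  by_contra hlt
  push_neg at hlt
  have : (1/2 : ℝ) ^ 10 ≤ (1/2 : ℝ) ^ (n + 1) :=
    pow_le_pow_of_le_one (by norm_num) (by norm_num) (by omega)
  linarith

private lemma case_cozero {X : Type} [TopologicalSpace X] (F : X → ℝ) (hF : Continuous F)
    (z : X) (hz0 : F z = 0) (hz : z ∈ closure {x | 0 < F x}) :
    ∃ (g : ℕ → X → ℝ) (U : ℕ → Set X),
      (∀ i, Continuous (g i)) ∧ (∀ i x, g i x ∈ Set.Icc (0 : ℝ) 2) ∧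
      (∀ i, IsOpen (U i)) ∧
      (∀ i, tsupport (g i) ⊆ U i) ∧
      (∀ i j, i ≠ j → U i ∩ U j = ∅) ∧
      (∀ i, z ∉ U i) ∧
      z ∈ closure (⋃ i, {x : X | 1 ≤ g i x}) := by
  classical
  -- the "core" at level n
  set a : ℕ → ℝ := fun n => (1/2 : ℝ) ^ n with ha
  have hapos : ∀ n, 0 < a n := fun n => by positivity
  have key : ∃ r : Fin 5, z ∈ closure (⋃ k : ℕ,
      {x : X | a (5 * k + (r : ℕ) + 10 + 1) ≤ F x ∧ F x ≤ a (5 * k + (r : ℕ) + 10)}) := by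
    by_contra hcon
    push_neg at hcon
    set W : Set X := (⋂ r : Fin 5, (closure (⋃ k : ℕ,
      {x : X | a (5 * k + (r : ℕ) + 10 + 1) ≤ F x ∧ F x ≤ a (5 * k + (r : ℕ) + 10)}))ᶜ)
      ∩ F ⁻¹' Set.Iio (a 10) with hW
    have hWopen : IsOpen W := by
      refine IsOpen.inter ?_ (hF.isOpen_preimage _ isOpen_Iio)
      exact isOpen_iInter_of_finite fun r => isClosed_closure.isOpen_compl
    have hzW : z ∈ W := by
      constructor
      · exact Set.mem_iInter.mpr fun r => hcon r
      · show F z < a 10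
        rw [hz0]
        exact hapos 10
    obtain ⟨y, hyW, hy⟩ := mem_closure_iff.mp hz W hWopen hzW
    obtain ⟨n, hn10, hnl, hnu⟩ := exists_pow_index (F y) hy (hyW.2)
    have hrep : ∃ k, 5 * k + n % 5 + 10 = n := by
      refine ⟨(n - 10) / 5, by omega⟩
    obtain ⟨k, hk⟩ := hrep
    have hmem : y ∈ ⋃ k : ℕ, {x : X | a (5 * k + (n % 5 : ℕ) + 10 + 1) ≤ F x ∧
        F x ≤ a (5 * k + (n % 5 : ℕ) + 10)} := by
      refine Set.mem_iUnion.mpr ⟨k, ?_⟩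
      rw [hk]
      exact ⟨hnl, hnu⟩
    have hr5 : n % 5 < 5 := Nat.mod_lt _ (by norm_num)
    have := Set.mem_iInter.mp hyW.1 ⟨n % 5, hr5⟩
    exact this (subset_closure hmem)
  obtain ⟨r, hkey⟩ := key
  set N : ℕ → ℕ := fun k => 5 * k + (r : ℕ) + 10 with hN
  set b : ℕ → ℝ := fun k => a (N k) with hb
  have hbpos : ∀ k, 0 < b k := fun k => hapos (N k)
  set g : ℕ → X → ℝ := fun k x =>
    2 * max 0 (min 1 (min ((F x - b k / 4) / (b k / 4)) ((2 * b k - F x) / b k))) with hg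
  set U : ℕ → Set X := fun k => {x | b k / 8 < F x ∧ F x < 4 * b k} with hU
  have hUopen : ∀ k, IsOpen (U k) := by
    intro k
    have : U k = F ⁻¹' Set.Ioo (b k / 8) (4 * b k) := rfl
    rw [this]
    exact hF.isOpen_preimage _ isOpen_Ioo
  have hsupp : ∀ k, tsupport (g k) ⊆ U k := by
    intro k
    have hsub : (Function.support (g k)) ⊆ F ⁻¹' Set.Icc (b k / 4) (2 * b k) := by
      intro x hx
      have hne : g k x ≠ 0 := hx
      have hpos : 0 < min 1 (min ((F x - b k / 4) / (b k / 4)) ((2 * b k - F x) / b k)) := by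
        by_contra hle
        push_neg at hle
        have : max 0 (min 1 (min ((F x - b k / 4) / (b k / 4)) ((2 * b k - F x) / b k))) = 0 :=
          max_eq_left hle
        apply hne
        simp only [hg, this, mul_zero]
      have hA : 0 < (F x - b k / 4) / (b k / 4) := lt_of_lt_of_le hpos (by
        exact (min_le_right _ _).trans (min_le_left _ _))
      have hB : 0 < (2 * b k - F x) / b k := lt_of_lt_of_le hpos (by
        exact (min_le_right _ _).trans (min_le_right _ _))
      have h4 : 0 < b k / 4 := by linarith [hbpos k]
      have hA' : 0 < F x - b k / 4 := by
        by_contra hc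
        push_neg at hc
        have : (F x - b k / 4) / (b k / 4) ≤ 0 := div_nonpos_of_nonpos_of_nonneg hc (le_of_lt h4)
        linarith
      have hB' : 0 < 2 * b k - F x := by
        by_contra hc
        push_neg at hc
        have : (2 * b k - F x) / b k ≤ 0 := div_nonpos_of_nonpos_of_nonneg hc (le_of_lt (hbpos k))
        linarith
      constructor <;> [linarith; linarith]
    have hcl : IsClosed (F ⁻¹' Set.Icc (b k / 4) (2 * b k)) :=
      IsClosed.preimage hF isClosed_Icc
    have := closure_minimal hsub hcl
    refine this.trans ?_
    intro x hx
    obtain ⟨hx1, hx2⟩ := hx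
    exact ⟨by linarith [hbpos k], by linarith [hbpos k]⟩
  refine ⟨g, U, ?_, ?_, hUopen, hsupp, ?_, ?_, ?_⟩
  · intro k
    refine continuous_const.mul (Continuous.max continuous_const (Continuous.min continuous_const
      (Continuous.min ?_ ?_)))
    · exact (hF.sub continuous_const).div_const _
    · exact (continuous_const.sub hF).div_const _
  · intro k x
    constructor
    · have : (0:ℝ) ≤ max 0 (min 1 (min ((F x - b k / 4) / (b k / 4)) ((2 * b k - F x) / b k))) :=
        le_max_left _ _
      simp only [hg]
      linarith
    · have h1 : min 1 (min ((F x - b k / 4) / (b k / 4)) ((2 * b k - F x) / b k)) ≤ 1 :=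
        min_le_left _ _
      have : max 0 (min 1 (min ((F x - b k / 4) / (b k / 4)) ((2 * b k - F x) / b k))) ≤ 1 :=
        max_le (by norm_num) h1
      simp only [hg]
      linarith
  · -- disjointness
    have main : ∀ i j, i < j → U i ∩ U j = ∅ := by
      intro i j hij
      have hle : N i + 5 ≤ N j := by simp only [hN]; omega
      have hbj : b j ≤ b i / 32 := by
        have : a (N j) ≤ a (N i + 5) :=
          pow_le_pow_of_le_one (by norm_num) (by norm_num) hle
        have heq : a (N i + 5) = a (N i) / 32 := by
          simp only [ha, pow_add]
          ring
        rw [heq] at this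
        exact this
      ext x
      simp only [Set.mem_inter_iff, Set.mem_empty_iff_false, iff_false]
      rintro ⟨⟨hi1, hi2⟩, ⟨hj1, hj2⟩⟩
      have : F x < 4 * (b i / 32) := lt_of_lt_of_le hj2 (by linarith)
      linarith
    intro i j hij
    rcases lt_or_gt_of_ne hij with h | h
    · exact main i j h
    · rw [Set.inter_comm]; exact main j i h
  · intro k hk
    have : b k / 8 < F z := hk.1
    rw [hz0] at this
    linarith [hbpos k]
  · refine closure_mono ?_ hkey
    refine Set.iUnion_subset fun k => ?_
    refine Set.subset_iUnion_of_subset k ?_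
    intro x hx
    obtain ⟨hx1, hx2⟩ := hx
    have hx1' : b k / 2 ≤ F x := by
      have : a (N k + 1) = b k / 2 := by
        simp only [hb, ha, pow_succ]
        ring
      rw [← this]
      have : 5 * k + (r:ℕ) + 10 + 1 = N k + 1 := rfl
      rw [← this]
      exact hx1
    have hx2' : F x ≤ b k := hx2
    show (1:ℝ) ≤ g k x
    have hA : (1:ℝ) ≤ (F x - b k / 4) / (b k / 4) := by
      rw [le_div_iff₀ (by linarith [hbpos k])]
      linarith
    have hB : (1:ℝ) ≤ (2 * b k - F x) / b k := by
      rw [le_div_iff₀ (hbpos k)]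
      linarith
    have hmin : min 1 (min ((F x - b k / 4) / (b k / 4)) ((2 * b k - F x) / b k)) = 1 :=
      min_eq_left (le_min hA hB)
    simp only [hg, hmin]
    norm_num

private lemma case_clopen {X : Type} [TopologicalSpace X] [T2Space X]
    (hbase : ∀ (x : X) (V : Set X), IsOpen V → x ∈ V → ∃ C, IsClopen C ∧ x ∈ C ∧ C ⊆ V)
    (z₀ : X) (hz₀ : ¬ IsOpen ({z₀} : Set X)) :
    ∃ (I : Type) (g : I → X → ℝ) (U : I → Set X),
      (∀ i, Continuous (g i)) ∧ (∀ i x, g i x ∈ Set.Icc (0 : ℝ) 2) ∧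
      (∀ i, IsOpen (U i)) ∧
      (∀ i, tsupport (g i) ⊆ U i) ∧
      (∀ i j, i ≠ j → U i ∩ U j = ∅) ∧
      (∀ i, z₀ ∉ U i) ∧
      z₀ ∈ closure (⋃ i, {x : X | 1 ≤ g i x}) := by
  classical
  set S : Set (Set (Set X)) :=
    {𝒮 | (∀ C ∈ 𝒮, IsClopen C ∧ z₀ ∉ C) ∧ 𝒮.Pairwise Disjoint} with hS
  obtain ⟨𝒰, h𝒰S, h𝒰max⟩ : ∃ m, Maximal (· ∈ S) m := by
    apply zorn_subset
    intro c hcS hchain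
    refine ⟨⋃₀ c, ⟨?_, ?_⟩, fun s hs => Set.subset_sUnion_of_mem hs⟩
    · rintro C ⟨s, hs, hCs⟩
      exact (hcS hs).1 C hCs
    · intro A hA B hB hAB
      obtain ⟨s1, hs1, hAs⟩ := hA
      obtain ⟨s2, hs2, hBs⟩ := hB
      rcases hchain.total hs1 hs2 with h | h
      · exact (hcS hs2).2 (h hAs) hBs hAB
      · exact (hcS hs1).2 hAs (h hBs) hAB
  have hcl : z₀ ∈ closure (⋃₀ 𝒰) := by
    rw [mem_closure_iff]
    intro W hWopen hzW
    by_contra hne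
    rw [Set.not_nonempty_iff_eq_empty] at hne
    have hy : ∃ y ∈ W, y ≠ z₀ := by
      by_contra hc
      push_neg at hc
      have : W = {z₀} := Set.eq_singleton_iff_unique_mem.mpr ⟨hzW, hc⟩
      exact hz₀ (this ▸ hWopen)
    obtain ⟨y, hyW, hyne⟩ := hy
    have hVopen : IsOpen (W \ {z₀}) := hWopen.sdiff isClosed_singleton
    obtain ⟨C, hCclopen, hyC, hCV⟩ := hbase y (W \ {z₀}) hVopen ⟨hyW, hyne⟩
    have hCnotin : C ∉ 𝒰 := by
      intro hmem
      have : y ∈ W ∩ ⋃₀ 𝒰 := ⟨hyW, C, hmem, hyC⟩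
      rw [hne] at this
      exact this
    have hins : insert C 𝒰 ∈ S := by
      constructor
      · rintro D hD
        rcases hD with rfl | hD
        · exact ⟨hCclopen, fun h => (hCV h).2 rfl⟩
        · exact h𝒰S.1 D hD
      · rw [Set.pairwise_insert]
        refine ⟨h𝒰S.2, ?_⟩
        intro D hD _
        have hdis : Disjoint C D := by
          rw [Set.disjoint_left]
          intro x hxC hxD
          have : x ∈ W ∩ ⋃₀ 𝒰 := ⟨(hCV hxC).1, D, hD, hxD⟩
          rw [hne] at this
          exact this
        exact ⟨hdis, hdis.symm⟩
    have := h𝒰max hins (Set.subset_insert _ _)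
    exact hCnotin (this (Set.mem_insert _ _))
  refine ⟨↥𝒰, fun i x => if x ∈ (i : Set X) then 2 else 0, fun i => (i : Set X),
    ?_, ?_, ?_, ?_, ?_, ?_, ?_⟩
  · intro i
    refine IsLocallyConstant.continuous ?_
    intro s
    have hclopen : IsClopen (i : Set X) := (h𝒰S.1 _ i.2).1
    by_cases h2 : (2:ℝ) ∈ s <;> by_cases h0 : (0:ℝ) ∈ s
    · have : (fun x => if x ∈ (i : Set X) then (2:ℝ) else 0) ⁻¹' s = Set.univ := by
        ext x; by_cases hx : x ∈ (i : Set X) <;> simp [hx, h2, h0]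
      rw [this]; exact isOpen_univ
    · have : (fun x => if x ∈ (i : Set X) then (2:ℝ) else 0) ⁻¹' s = (i : Set X) := by
        ext x; by_cases hx : x ∈ (i : Set X) <;> simp [hx, h2, h0]
      rw [this]; exact hclopen.2
    · have : (fun x => if x ∈ (i : Set X) then (2:ℝ) else 0) ⁻¹' s = (i : Set X)ᶜ := by
        ext x; by_cases hx : x ∈ (i : Set X) <;> simp [hx, h2, h0]
      rw [this]; exact hclopen.1.isOpen_compl
    · have : (fun x => if x ∈ (i : Set X) then (2:ℝ) else 0) ⁻¹' s = ∅ := by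
        ext x; by_cases hx : x ∈ (i : Set X) <;> simp [hx, h2, h0]
      rw [this]; exact isOpen_empty
  · intro i x
    dsimp only
    split <;> exact ⟨by norm_num, by norm_num⟩
  · intro i
    exact (h𝒰S.1 _ i.2).1.2
  · intro i
    have hclopen : IsClopen (i : Set X) := (h𝒰S.1 _ i.2).1
    have : Function.support (fun x => if x ∈ (i : Set X) then (2:ℝ) else 0) ⊆ (i : Set X) := by
      intro x hx
      by_contra hc
      apply hx
      simp [hc]
    refine (closure_minimal this hclopen.1).trans subset_rfl
  · intro i j hij
    have hne : (i : Set X) ≠ (j : Set X) := fun h => hij (Subtype.ext h)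
    have := h𝒰S.2 i.2 j.2 hne
    exact Set.disjoint_iff_inter_eq_empty.mp this
  · intro i
    exact (h𝒰S.1 _ i.2).2
  · refine closure_mono ?_ (by rwa [Set.sUnion_eq_iUnion] at hcl)
    refine Set.iUnion_subset fun i => ?_
    refine Set.subset_iUnion_of_subset i ?_
    intro x hx
    show (1:ℝ) ≤ if x ∈ (i : Set X) then 2 else 0
    rw [if_pos hx]
    norm_num

/-- If a Tychonoff (completely regular Hausdorff) space `X` is not discrete, then there exist
an infinite index set `κ`, a point `z ∈ X`, a family of continuous functions `g i : X → [0,2]`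
and a family of open sets `U i` satisfying conditions (i)–(iii). -/
theorem exists_family_of_not_discrete (X : Type) [TopologicalSpace X]
    [CompletelyRegularSpace X] [T2Space X] (hX : ¬ DiscreteTopology X) :
    ∃ (κ : Type) (_ : Infinite κ) (z : X) (g : κ → X → ℝ) (U : κ → Set X),
      (∀ i, Continuous (g i)) ∧ (∀ i x, g i x ∈ Set.Icc (0 : ℝ) 2) ∧
      (∀ i, IsOpen (U i)) ∧
      (∀ i, tsupport (g i) ⊆ U i) ∧
      (∀ i j, i ≠ j → U i ∩ U j = ∅) ∧
      (∀ i, z ∉ U i) ∧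
      z ∈ closure (⋃ i, {x : X | 1 ≤ g i x}) := by
  classical
  by_cases H : ∃ G : X → ℝ, Continuous G ∧ ∃ z, G z = 0 ∧ z ∈ closure {x | G x ≠ 0}
  · obtain ⟨G, hGc, z, hGz, hzcl⟩ := H
    have habs : {x : X | G x ≠ 0} = {x | 0 < |G x|} := by
      ext x; simp [abs_pos]
    obtain ⟨g, U, h1, h2, h3, h4, h5, h6, h7⟩ :=
      case_cozero (fun x => |G x|) hGc.abs z (by simp [hGz]) (by rw [← habs]; exact hzcl)
    exact pad_family ℕ z g U h1 h2 h3 h4 h5 h6 h7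
  · push_neg at H
    have hbase : ∀ (x : X) (V : Set X), IsOpen V → x ∈ V →
        ∃ C, IsClopen C ∧ x ∈ C ∧ C ⊆ V := by
      intro x V hV hxV
      obtain ⟨f, hfc, hfx, hfK⟩ := CompletelyRegularSpace.completely_regular x Vᶜ
        hV.isClosed_compl (by simp [hxV])
      set G : X → ℝ := fun y => 1 - (f y : ℝ) with hG
      have hGc : Continuous G := continuous_const.sub (continuous_subtype_val.comp hfc)
      have hGopen : IsOpen {y | G y ≠ 0} := isOpen_ne_fun hGc continuous_const
      have hGclosed : IsClosed {y | G y ≠ 0} := by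
        apply isClosed_of_closure_subset
        intro y hy
        exact fun h0 => H G hGc y h0 hy
      refine ⟨{y | G y ≠ 0}, ⟨hGclosed, hGopen⟩, ?_, ?_⟩
      · show G x ≠ 0
        simp [hG, hfx]
      · intro y hy
        by_contra hc
        apply hy
        have : f y = 1 := hfK (by simpa using hc)
        simp [hG, this]
    have hz₀ : ∃ z₀ : X, ¬ IsOpen ({z₀} : Set X) := by
      by_contra hc
      push_neg at hc
      exact hX (discreteTopology_iff_isOpen_singleton.mpr fun a => hc a)
    obtain ⟨z₀, hz₀⟩ := hz₀
    obtain ⟨I, g, U, h1, h2, h3, h4, h5, h6, h7⟩ := case_clopen hbase z₀ hz₀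
    exact pad_family I z₀ g U h1 h2 h3 h4 h5 h6 h7
end

section
/- Let X be a topological space and suppose there exists a continuous function h : X → [0,1] such that the set L = {x ∈ X : h(x) > 0} is not closed in X. Then there exist a point z ∈ X, a sequence (g_n)_{n∈ℕ} of continuous functions from X to [0,2], and a sequence (U_n)_{n∈ℕ} of open subsets of X such that conditions (i)–(iii) hold (with κ = ℕ). -/
open Set

private lemma aux_family {X : Type*} [TopologicalSpace X] (h : X → ℝ) (hc : Continuous h)
    (h0 : ∀ x, 0 ≤ h x) (z : X) (hz0 : h z = 0) (k : ℕ → ℕ)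
    (hk : ∀ n m, n < m → k n + 2 ≤ k m)
    (hcl : z ∈ closure (⋃ n, {x : X | (2:ℝ)⁻¹ ^ (k n + 1) ≤ h x ∧ h x ≤ (2:ℝ)⁻¹ ^ (k n)})) :
    ∃ (g : ℕ → X → ℝ) (U : ℕ → Set X),
      (∀ n, Continuous (g n)) ∧ (∀ n x, g n x ∈ Set.Icc (0 : ℝ) 2) ∧
      (∀ n, IsOpen (U n)) ∧
      (∀ n, tsupport (g n) ⊆ U n) ∧
      (∀ n m, n ≠ m → U n ∩ U m = ∅) ∧
      (∀ n, z ∉ U n) ∧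
      z ∈ closure (⋃ n, {x : X | 1 ≤ g n x}) := by
  set c : ℕ → ℝ := fun n => (2:ℝ)⁻¹ ^ (k n) with hcdef
  have hcpos : ∀ n, 0 < c n := fun n => by positivity
  set g : ℕ → X → ℝ := fun n x =>
    min 2 (min (max 0 (32 * (h x / c n - 7/16))) (max 0 (32 * (9/8 - h x / c n)))) with hgdef
  set U : ℕ → Set X := fun n => h ⁻¹' (Ioo (3/8 * c n) (3/2 * c n)) with hUdef
  have hgnonneg : ∀ n x, 0 ≤ g n x := by
    intro n x
    refine le_min (by norm_num) (le_min (le_max_left _ _) (le_max_left _ _))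
  refine ⟨g, U, ?_, ?_, ?_, ?_, ?_, ?_, ?_⟩
  · intro n
    fun_prop
  · intro n x
    exact ⟨hgnonneg n x, min_le_left _ _⟩
  · intro n
    exact isOpen_Ioo.preimage hc
  · -- tsupport
    intro n
    have hC : IsClosed (h ⁻¹' (Icc (7/16 * c n) (9/8 * c n))) := isClosed_Icc.preimage hc
    refine (closure_minimal ?_ hC).trans ?_
    · intro x hx
      rw [Function.mem_support] at hx
      by_contra hxc
      apply hx
      simp only [mem_preimage, mem_Icc, not_and_or, not_le] at hxc
      have hcn := hcpos n
      rcases hxc with h1 | h1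
      · have hA : max 0 (32 * (h x / c n - 7/16)) = 0 := by
          apply max_eq_left
          have : h x / c n < 7/16 := by rw [div_lt_iff₀ hcn]; linarith
          linarith
        refine le_antisymm ?_ (hgnonneg n x)
        calc g n x ≤ min (max 0 (32 * (h x / c n - 7/16))) (max 0 (32 * (9/8 - h x / c n))) :=
              min_le_right _ _
          _ ≤ max 0 (32 * (h x / c n - 7/16)) := min_le_left _ _
          _ = 0 := hA
      · have hB : max 0 (32 * (9/8 - h x / c n)) = 0 := by
          apply max_eq_left
          have : (9:ℝ)/8 < h x / c n := by rw [lt_div_iff₀ hcn]; linarith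
          linarith
        refine le_antisymm ?_ (hgnonneg n x)
        calc g n x ≤ min (max 0 (32 * (h x / c n - 7/16))) (max 0 (32 * (9/8 - h x / c n))) :=
              min_le_right _ _
          _ ≤ max 0 (32 * (9/8 - h x / c n)) := min_le_right _ _
          _ = 0 := hB
    · intro x hx
      simp only [mem_preimage, mem_Icc] at hx
      have hcn := hcpos n
      exact ⟨by linarith [hx.1], by linarith [hx.2]⟩
  · -- disjoint
    have key : ∀ n m, n < m → U n ∩ U m = ∅ := by
      intro n m hnm
      ext x
      simp only [hUdef, mem_inter_iff, mem_preimage, mem_Ioo, mem_empty_iff_false, iff_false,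
        not_and, and_imp]
      intro h1 _ _ h4
      exfalso
      have hle : c m ≤ c n * (2:ℝ)⁻¹ ^ 2 := by
        have : (2:ℝ)⁻¹ ^ (k m) ≤ (2:ℝ)⁻¹ ^ (k n + 2) :=
          pow_le_pow_of_le_one (by norm_num) (by norm_num) (hk n m hnm)
        calc c m ≤ (2:ℝ)⁻¹ ^ (k n + 2) := this
          _ = c n * (2:ℝ)⁻¹ ^ 2 := by rw [hcdef]; ring
      norm_num at hle
      linarith
    intro n m hnm
    rcases lt_or_gt_of_ne hnm with hlt | hlt
    · exact key n m hlt
    · rw [Set.inter_comm]; exact key m n hlt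
  · intro n
    simp only [hUdef, mem_preimage, mem_Ioo, hz0]
    intro h1
    exact absurd h1.1 (by nlinarith [hcpos n])
  · refine closure_mono ?_ hcl
    refine Set.iUnion_mono fun n => ?_
    intro x hx
    obtain ⟨hx1, hx2⟩ := hx
    have hcn := hcpos n
    have hs1 : (1:ℝ)/2 ≤ h x / c n := by
      rw [le_div_iff₀ hcn]
      have : (2:ℝ)⁻¹ ^ (k n + 1) = c n * (1/2) := by rw [hcdef, pow_succ]; norm_num
      linarith [this ▸ hx1]
    have hs2 : h x / c n ≤ 1 := by
      rw [div_le_one hcn]; exact hx2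
    show (1:ℝ) ≤ g n x
    refine le_min (by norm_num) (le_min ?_ ?_)
    · refine le_max_of_le_right ?_; linarith
    · refine le_max_of_le_right ?_; linarith

/-- If a topological space `X` admits a continuous function `h : X → [0,1]` such that the set
`{x | h x > 0}` is not closed, then there exist a point `z ∈ X` and sequences `(g_n)` of
continuous functions `X → [0,2]` and `(U_n)` of open sets satisfying conditions (i)–(iii). -/
theorem exists_family_of_pos_set_not_closed {X : Type*} [TopologicalSpace X]
    (h : X → ℝ) (hc : Continuous h) (h01 : ∀ x, h x ∈ Set.Icc (0 : ℝ) 1)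
    (hnc : ¬ IsClosed {x : X | 0 < h x}) :
    ∃ (z : X) (g : ℕ → X → ℝ) (U : ℕ → Set X),
      (∀ n, Continuous (g n)) ∧ (∀ n x, g n x ∈ Set.Icc (0 : ℝ) 2) ∧
      (∀ n, IsOpen (U n)) ∧
      (∀ n, tsupport (g n) ⊆ U n) ∧
      (∀ n m, n ≠ m → U n ∩ U m = ∅) ∧
      (∀ n, z ∉ U n) ∧
      z ∈ closure (⋃ n, {x : X | 1 ≤ g n x}) := by
  classical
  have h0 : ∀ x, 0 ≤ h x := fun x => (h01 x).1
  have h1 : ∀ x, h x ≤ 1 := fun x => (h01 x).2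
  -- obtain z
  obtain ⟨z, hzc, hzn⟩ : ∃ z, z ∈ closure {x : X | 0 < h x} ∧ z ∉ {x : X | 0 < h x} := by
    by_contra hcon
    push_neg at hcon
    exact hnc (closure_subset_iff_isClosed.mp fun x hx => hcon x hx)
  have hz0 : h z = 0 := le_antisymm (not_lt.mp hzn) (h0 z)
  -- band decomposition
  set S : ℕ → Set X := fun j => {x : X | (2:ℝ)⁻¹ ^ (j + 1) ≤ h x ∧ h x ≤ (2:ℝ)⁻¹ ^ j} with hSdef
  have hcover : {x : X | 0 < h x} ⊆ (⋃ n, S (2 * n)) ∪ (⋃ n, S (2 * n + 1)) := by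
    intro x hx
    have hx : 0 < h x := hx
    have hex : ∃ m, (2:ℝ)⁻¹ ^ (m + 1) < h x := by
      obtain ⟨m, hm⟩ := exists_pow_lt_of_lt_one hx (by norm_num : (2:ℝ)⁻¹ < 1)
      refine ⟨m, lt_of_le_of_lt ?_ hm⟩
      exact pow_le_pow_of_le_one (by norm_num) (by norm_num) (Nat.le_succ m)
    set j := Nat.find hex with hjdef
    have hj1 : (2:ℝ)⁻¹ ^ (j + 1) < h x := Nat.find_spec hex
    have hj2 : h x ≤ (2:ℝ)⁻¹ ^ j := by
      rcases Nat.eq_zero_or_pos j with hj0 | hj0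
      · rw [hj0, pow_zero]; exact h1 x
      · obtain ⟨i, hi⟩ := Nat.exists_eq_succ_of_ne_zero hj0.ne'
        have hlt : i < Nat.find hex := by omega
        have := Nat.find_min hex hlt
        rw [hi]
        exact not_lt.mp this
    have hxS : x ∈ S j := ⟨hj1.le, hj2⟩
    rcases Nat.even_or_odd j with ⟨m, hm⟩ | ⟨m, hm⟩
    · left; exact Set.mem_iUnion.mpr ⟨m, by rwa [show 2 * m = j by omega]⟩
    · right; exact Set.mem_iUnion.mpr ⟨m, by rwa [show 2 * m + 1 = j by omega]⟩
  have hzc2 : z ∈ closure (⋃ n, S (2 * n)) ∪ closure (⋃ n, S (2 * n + 1)) := by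
    rw [← closure_union]
    exact closure_mono hcover hzc
  rcases hzc2 with hz | hz
  · obtain ⟨g, U, hg⟩ := aux_family h hc h0 z hz0 (fun n => 2 * n)
      (fun n m hnm => by omega) hz
    exact ⟨z, g, U, hg⟩
  · obtain ⟨g, U, hg⟩ := aux_family h hc h0 z hz0 (fun n => 2 * n + 1)
      (fun n m hnm => by omega) hz
    exact ⟨z, g, U, hg⟩
end

section
/- Let X be a topological space, h : X → [0,1] a continuous function, and z ∈ X a point with h(z) = 0 that lies in the closure of {x ∈ X : h(x) > 0}. Assume that for every neighborhood W of z there exists ε > 0 such that the closure of h(W) in ℝ contains the interval [0, ε). Then there exist a sequence (g_n)_{n∈ℕ} of continuous functions from X to [0,2] and a sequence (U_n)_{n∈ℕ} of open subsets of X such that conditions (i)–(iii) hold for the point z (with κ = ℕ). -/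
/-- Subcase 1.1: if `h : X → [0,1]` is continuous, `h z = 0`, `z` lies in the closure of
`{x | h x > 0}`, and for every neighborhood `W` of `z` the closure of `h(W)` contains an
interval `[0, ε)` for some `ε > 0`, then there exist sequences `(g_n)` of continuous functions
`X → [0,2]` and `(U_n)` of open sets satisfying conditions (i)–(iii) for `z`. -/
theorem exists_family_of_closure_contains_interval {X : Type*} [TopologicalSpace X]
    (h : X → ℝ) (hc : Continuous h) (h01 : ∀ x, h x ∈ Set.Icc (0 : ℝ) 1)
    (z : X) (hz0 : h z = 0) (hzcl : z ∈ closure {x : X | 0 < h x})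
    (hW : ∀ W ∈ nhds z, ∃ ε > (0 : ℝ), Set.Ico (0 : ℝ) ε ⊆ closure (h '' W)) :
    ∃ (g : ℕ → X → ℝ) (U : ℕ → Set X),
      (∀ n, Continuous (g n)) ∧ (∀ n x, g n x ∈ Set.Icc (0 : ℝ) 2) ∧
      (∀ n, IsOpen (U n)) ∧
      (∀ n, tsupport (g n) ⊆ U n) ∧
      (∀ n m, n ≠ m → U n ∩ U m = ∅) ∧
      (∀ n, z ∉ U n) ∧
      z ∈ closure (⋃ n, {x : X | 1 ≤ g n x}) := by
  set a : ℕ → ℝ := fun n => (1 / 4 : ℝ) ^ n with ha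
  have hapos : ∀ n, 0 < a n := fun n => pow_pos (by norm_num) n
  have hkey : ∀ n, (4 : ℝ) ^ n * a n = 1 := by
    intro n; rw [ha]; rw [← mul_pow]; norm_num
  refine ⟨fun n x => max 0 (2 - 16 * (4 : ℝ) ^ n * |h x - a n / 2|),
    fun n => h ⁻¹' Set.Ioo (a n / 4) (a n), ?_, ?_, ?_, ?_, ?_, ?_, ?_⟩
  · intro n
    exact continuous_const.max
      (continuous_const.sub (continuous_const.mul ((hc.sub continuous_const).abs)))
  · intro n x
    constructor
    · exact le_max_left _ _
    · refine max_le (by norm_num) ?_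
      have : 0 ≤ 16 * (4 : ℝ) ^ n * |h x - a n / 2| :=
        mul_nonneg (by positivity) (abs_nonneg _)
      linarith
  · intro n
    exact isOpen_Ioo.preimage hc
  · intro n
    have hC : IsClosed {x : X | |h x - a n / 2| ≤ a n / 8} := by
      have : {x : X | |h x - a n / 2| ≤ a n / 8}
          = (fun x => |h x - a n / 2|) ⁻¹' Set.Iic (a n / 8) := rfl
      rw [this]
      exact IsClosed.preimage ((hc.sub continuous_const).abs) isClosed_Iic
    refine (closure_minimal ?_ hC).trans ?_
    · intro x hx
      simp only [Function.mem_support] at hx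
      by_contra hcon
      apply hx
      have h8 : a n / 8 < |h x - a n / 2| := lt_of_not_ge hcon
      have h2 : (2 : ℝ) ≤ 16 * (4 : ℝ) ^ n * |h x - a n / 2| := by
        have := hkey n
        have h4 : (0 : ℝ) < (4 : ℝ) ^ n := pow_pos (by norm_num) n
        nlinarith [abs_nonneg (h x - a n / 2)]
      simp only [max_eq_left_iff]
      linarith
    · intro x hx
      simp only [Set.mem_setOf_eq] at hx
      have := abs_le.mp hx
      constructor <;> [skip; skip] <;>
        · have hp := hapos n; linarith [this.1, this.2]
  · intro n m hnm
    have key : ∀ p q : ℕ, p < q → ∀ x : X,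
        x ∈ h ⁻¹' Set.Ioo (a p / 4) (a p) → x ∈ h ⁻¹' Set.Ioo (a q / 4) (a q) → False := by
      intro p q hpq x hx1 hx2
      have hle : a q ≤ a p / 4 := by
        have : a q ≤ a (p + 1) :=
          pow_le_pow_of_le_one (by norm_num) (by norm_num) hpq
        have : a (p + 1) = a p / 4 := by simp only [ha]; rw [pow_succ]; ring
        linarith [pow_le_pow_of_le_one (show (0:ℝ) ≤ 1/4 by norm_num)
          (show (1/4:ℝ) ≤ 1 by norm_num) hpq, this]
      simp only [Set.mem_preimage, Set.mem_Ioo] at hx1 hx2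
      linarith [hx1.1, hx2.2]
    rw [Set.eq_empty_iff_forall_notMem]
    intro x ⟨hx1, hx2⟩
    rcases hnm.lt_or_gt with hlt | hlt
    · exact key n m hlt x hx1 hx2
    · exact key m n hlt x hx2 hx1
  · intro n
    simp only [Set.mem_preimage, Set.mem_Ioo, hz0]
    intro hcon
    linarith [hapos n, hcon.1]
  · rw [mem_closure_iff]
    intro W hWopen hzW
    obtain ⟨ε, hε, hsub⟩ := hW W (hWopen.mem_nhds hzW)
    obtain ⟨n, hn⟩ := exists_pow_lt_of_lt_one hε (show (1/4 : ℝ) < 1 by norm_num)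
    have hmem : a n / 2 ∈ closure (h '' W) := by
      apply hsub
      constructor
      · linarith [hapos n]
      · have := hapos n; linarith [hn]
    rw [mem_closure_iff] at hmem
    obtain ⟨y, hyV, hyim⟩ := hmem (Set.Ioo (a n / 2 - a n / 16) (a n / 2 + a n / 16))
      isOpen_Ioo (by constructor <;> [linarith [hapos n]; linarith [hapos n]])
    obtain ⟨x, hxW, hxy⟩ := hyim
    refine ⟨x, hxW, ?_⟩
    rw [Set.mem_iUnion]
    refine ⟨n, ?_⟩
    simp only [Set.mem_setOf_eq]
    refine le_trans ?_ (le_max_right _ _)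
    have habs : |h x - a n / 2| ≤ a n / 16 := by
      rw [hxy]
      rw [abs_le]
      simp only [Set.mem_Ioo] at hyV
      constructor <;> linarith [hyV.1, hyV.2]
    have h4 : (0 : ℝ) < (4 : ℝ) ^ n := pow_pos (by norm_num) n
    nlinarith [hkey n]
end

section
/- Let X be a topological space, h : X → [0,1] a continuous function, and z ∈ X a point with h(z) = 0 that lies in the closure of {x ∈ X : h(x) > 0}. Assume there exists a neighborhood W of z such that the closure of h(W) in ℝ contains no interval of the form [0, ε) with ε > 0. Then there exist a sequence (g_n)_{n∈ℕ} of continuous functions from X to [0,2] and a sequence (U_n)_{n∈ℕ} of open subsets of X such that conditions (i)–(iii) hold for the point z (with κ = ℕ). -/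
/-!
Let `C` be the closure of `h '' W`. It is closed, contains `0`, and misses points of every
`(0, ε)`, so there is a strictly decreasing sequence `t n → 0` of positive reals outside `C`.
The endpoints of `[t (n+1), t n]` lie outside `C`, so its compact trace on `C` sits inside
`(t (n+1), t n)`, and a Urysohn function `φ n` equal to `1` there and supported in that open
interval gives `g n = φ n ∘ h` and `U n = h ⁻¹' (t (n+1), t n)`. Points `x ∈ W` close to `z`
with `h x > 0` have `h x ∈ C ∩ (0, t 0)`, hence `g n x = 1` for some `n`.
-/

open Set Filter Topology

theorem exists_seq_strictAnti_tendsto_notMem {α : Type*} [LinearOrder α]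
    [TopologicalSpace α] [OrderTopology α] [FirstCountableTopology α] [NoMaxOrder α]
    {C : Set α} {a : α} (ha : a ∈ C) (hC : ∀ b > a, ¬Ico a b ⊆ C) :
    ∃ u : ℕ → α, StrictAnti u ∧ Tendsto u atTop (𝓝 a) ∧ ∀ n, u n ∈ Ioi a \ C := by
  have hbelow : ∀ b > a, ∃ t ∈ Ioi a \ C, t < b := fun b hb => by
    obtain ⟨t, ⟨hat, htb⟩, htC⟩ := not_subset.1 (hC b hb)
    exact ⟨t, ⟨hat.lt_of_ne (by rintro rfl; exact htC ha), htC⟩, htb⟩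
  have hglb : IsGLB (Ioi a \ C) a := ⟨fun t ht => ht.1.le, fun b hb => not_lt.1 fun hab =>
    let ⟨t, ht, htb⟩ := hbelow b hab; (hb ht).not_gt htb⟩
  obtain ⟨b, hb⟩ := exists_gt a
  obtain ⟨u, hu, -, hlim, huC⟩ := hglb.exists_seq_strictAnti_tendsto_of_notMem
    (fun h => h.2 ha) ((hbelow b hb).imp fun _ => And.left)
  exact ⟨u, hu, hlim, huC⟩

theorem exists_tsupport_subset_Ioo_eqOn_one_of_notMem {α : Type*}
    [ConditionallyCompleteLinearOrder α] [TopologicalSpace α] [OrderTopology α]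
    {C : Set α} (hC : IsClosed C) {a b : α} (ha : a ∉ C) (hb : b ∉ C) :
    ∃ φ : C(α, ℝ),
      tsupport φ ⊆ Ioo a b ∧ EqOn φ 1 (C ∩ Icc a b) ∧ ∀ x, φ x ∈ Icc 0 1 :=
  exists_tsupport_one_of_isOpen_isClosed isOpen_Ioo
    (isCompact_Icc.closure_of_subset Ioo_subset_Icc_self) (hC.inter isClosed_Icc)
    fun _ hx => ⟨hx.2.1.lt_of_ne (by rintro rfl; exact ha hx.1),
      hx.2.2.lt_of_ne (by rintro rfl; exact hb hx.1)⟩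

theorem exists_mem_Ioc_succ_of_tendsto {α : Type*} [LinearOrder α] [TopologicalSpace α]
    [ClosedIciTopology α] {u : ℕ → α} {a s : α} (hu : Tendsto u atTop (𝓝 a)) (has : a < s)
    (hs : s ≤ u 0) : ∃ n, s ∈ Ioc (u (n + 1)) (u n) := by
  classical
  have hex : ∃ n, u n < s := (hu.eventually_lt_const has).exists
  obtain ⟨n, hn⟩ : ∃ n, Nat.find hex = n + 1 := Nat.exists_eq_succ_of_ne_zero fun h0 =>
    (Nat.find_spec hex).not_ge (h0 ▸ hs)
  exact ⟨n, hn ▸ Nat.find_spec hex, not_lt.1 (Nat.find_min hex (by omega))⟩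

theorem mem_closure_inter_of_mem_nhds {X : Type*} [TopologicalSpace X] {s t : Set X} {z : X}
    (hs : z ∈ closure s) (ht : t ∈ 𝓝 z) : z ∈ closure (s ∩ t) := by
  rw [mem_closure_iff_nhdsWithin_neBot] at hs ⊢
  rwa [nhdsWithin_inter_of_mem' (mem_nhdsWithin_of_mem_nhds ht)]

theorem exists_family_of_closure_omits_intervals_general {X : Type*} [TopologicalSpace X]
    (h : X → ℝ) (hc : Continuous h)
    (z : X) (hz0 : h z = 0) (hzcl : z ∈ closure {x : X | 0 < h x})
    (hW : ∃ W ∈ nhds z, ∀ ε > (0 : ℝ), ¬ Set.Ico (0 : ℝ) ε ⊆ closure (h '' W)) :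
    ∃ (g : ℕ → X → ℝ) (U : ℕ → Set X),
      (∀ n, Continuous (g n)) ∧ (∀ n x, g n x ∈ Set.Icc (0 : ℝ) 2) ∧
      (∀ n, IsOpen (U n)) ∧
      (∀ n, tsupport (g n) ⊆ U n) ∧
      (∀ n m, n ≠ m → U n ∩ U m = ∅) ∧
      (∀ n, z ∉ U n) ∧
      z ∈ closure (⋃ n, {x : X | 1 ≤ g n x}) := by
  obtain ⟨W, hWz, hgap⟩ := hW
  have h0C : (0 : ℝ) ∈ closure (h '' W) := subset_closure ⟨z, mem_of_mem_nhds hWz, hz0⟩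
  obtain ⟨t, ht_anti, ht_lim, htC⟩ := exists_seq_strictAnti_tendsto_notMem h0C hgap
  choose φ hφ_supp hφ_one hφ_range using fun n =>
    exists_tsupport_subset_Ioo_eqOn_one_of_notMem isClosed_closure (htC (n + 1)).2 (htC n).2
  refine ⟨fun n => φ n ∘ h, fun n => h ⁻¹' Ioo (t (n + 1)) (t n),
    fun n => (φ n).continuous.comp hc,
    fun n x => Icc_subset_Icc_right one_le_two (hφ_range n (h x)),
    fun n => isOpen_Ioo.preimage hc,
    fun n => (tsupport_comp_subset_preimage _ hc).trans (preimage_mono (hφ_supp n)),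
    fun n m hnm => ?_, fun n hz => (htC (n + 1)).1.not_gt (hz0 ▸ hz.1), ?_⟩
  · have hdisj : Disjoint (Ioo (t (n + 1)) (t n)) (Ioo (t (m + 1)) (t m)) :=
      ht_anti.antitone.pairwise_disjoint_on_Ioo_succ hnm
    rw [← preimage_inter, hdisj.inter_eq, preimage_empty]
  · have hnear : z ∈ closure ({x | 0 < h x} ∩ (W ∩ h ⁻¹' Iio (t 0))) :=
      mem_closure_inter_of_mem_nhds hzcl
        (inter_mem hWz (hc.continuousAt.preimage_mem_nhds (Iio_mem_nhds (hz0 ▸ (htC 0).1))))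
    refine closure_mono (fun x hx => ?_) hnear
    obtain ⟨hx0, hxW, hxt⟩ := hx
    obtain ⟨n, hn⟩ := exists_mem_Ioc_succ_of_tendsto ht_lim hx0 hxt.le
    exact mem_iUnion.2 ⟨n, (hφ_one n ⟨subset_closure (mem_image_of_mem h hxW),
      Ioc_subset_Icc_self hn⟩).ge⟩

/-- Subcase 1.2: if `h : X → [0,1]` is continuous, `h z = 0`, `z` lies in the closure of
`{x | h x > 0}`, and there is a neighborhood `W` of `z` such that the closure of `h(W)`
contains no interval of the form `[0, ε)` with `ε > 0`, then there exist sequences `(g_n)` of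
continuous functions `X → [0,2]` and `(U_n)` of open sets satisfying conditions (i)–(iii)
for `z`. -/
theorem exists_family_of_closure_omits_intervals {X : Type*} [TopologicalSpace X]
    (h : X → ℝ) (hc : Continuous h) (h01 : ∀ x, h x ∈ Set.Icc (0 : ℝ) 1)
    (z : X) (hz0 : h z = 0) (hzcl : z ∈ closure {x : X | 0 < h x})
    (hW : ∃ W ∈ nhds z, ∀ ε > (0 : ℝ), ¬ Set.Ico (0 : ℝ) ε ⊆ closure (h '' W)) :
    ∃ (g : ℕ → X → ℝ) (U : ℕ → Set X),
      (∀ n, Continuous (g n)) ∧ (∀ n x, g n x ∈ Set.Icc (0 : ℝ) 2) ∧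
      (∀ n, IsOpen (U n)) ∧
      (∀ n, tsupport (g n) ⊆ U n) ∧
      (∀ n m, n ≠ m → U n ∩ U m = ∅) ∧
      (∀ n, z ∉ U n) ∧
      z ∈ closure (⋃ n, {x : X | 1 ≤ g n x}) :=
  exists_family_of_closure_omits_intervals_general h hc z hz0 hzcl hW
end
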